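/- arXiv:1502.03345 — 3 statements merged into one kernel-verified Lean document; each statement's English description precedes it below -/
import Mathlib

section
/- The map π⁺ : S³ ∖ H⁺ → S¹, (z₁,z₂) ↦ z₁z₂/|z₁z₂|, is a locally trivial fiber bundle (in particular a surjective submersion), and for each ω ∈ S¹ the fiber (π⁺)⁻¹(ω) is homeomorphic to the open annulus S¹ × (0,1). -/
open Complex

/-- The sphere `S³ ⊂ ℂ²`. -/
def Sphere3 : Set (ℂ × ℂ) := {p | ‖p.1‖ ^ 2 + ‖p.2‖ ^ 2 = 1}

/-- The complement `S³ ∖ H⁺` of the positive Hopf link, as a topological space. -/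
abbrev HopfCompl : Type := {z : ℂ × ℂ // z ∈ Sphere3 ∧ z.1 * z.2 ≠ 0}

/-- The circle `S¹ ⊂ ℂ`. -/
abbrev S1 : Type := {w : ℂ // ‖w‖ = 1}

/-! The map `z ↦ (π⁺ z, z₁/|z₁|, |z₁|²)` is a homeomorphism `S³ ∖ H⁺ ≃ₜ S¹ × S¹ × (0,1)`, with
inverse `(ω, u, t) ↦ (√t u, √(1-t) ω ū)`. Its first component is `π⁺`, so `π⁺` is the projection
of a globally trivial bundle, and every fiber is `S¹ × (0,1)`. -/

open ComplexConjugate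

namespace Homeomorph

variable {X B F : Type*} [TopologicalSpace X] [TopologicalSpace B] [TopologicalSpace F]

def prodSubtypeFstEquivSubtypeProd {p : B → Prop} : {s : B × F // p s.1} ≃ₜ {b // p b} × F where
  toEquiv := Equiv.prodSubtypeFstEquivSubtypeProd
  continuous_toFun :=
    (continuous_subtype_val.fst.subtype_mk _).prodMk continuous_subtype_val.snd
  continuous_invFun :=
    ((continuous_subtype_val.comp continuous_fst).prodMk continuous_snd).subtype_mk _

def restrictPreimageFst (e : X ≃ₜ B × F) (U : Set B) : {x // (e x).1 ∈ U} ≃ₜ U × F :=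
  (e.subtype fun _ => Iff.rfl).trans prodSubtypeFstEquivSubtypeProd

def fiberFst (e : X ≃ₜ B × F) (b : B) : {x // (e x).1 = b} ≃ₜ F :=
  (e.restrictPreimageFst {b}).trans (uniqueProd _ _)

end Homeomorph

lemma norm_div_ofReal_norm {w : ℂ} (hw : w ≠ 0) : ‖w / (‖w‖ : ℂ)‖ = 1 := by
  rw [norm_div, norm_real, norm_norm, div_self (norm_ne_zero_iff.mpr hw)]

noncomputable def phase {w : ℂ} (hw : w ≠ 0) : S1 := ⟨w / ‖w‖, norm_div_ofReal_norm hw⟩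

@[simp]
lemma coe_phase {w : ℂ} (hw : w ≠ 0) : (phase hw : ℂ) = w / ‖w‖ := rfl

lemma continuous_phase {X : Type*} [TopologicalSpace X] {f : X → ℂ} (hf : Continuous f)
    (hf0 : ∀ x, f x ≠ 0) : Continuous fun x => phase (hf0 x) :=
  (hf.div (continuous_ofReal.comp hf.norm) fun x =>
    ofReal_ne_zero.mpr (norm_ne_zero_iff.mpr (hf0 x))).subtype_mk _

lemma coe_mul_conj (u : S1) : (u : ℂ) * conj (u : ℂ) = 1 := by
  rw [mul_conj', u.2, ofReal_one, one_pow]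

lemma coe_phase_eq_of_eq_ofReal_mul {w : ℂ} (hw : w ≠ 0) {r : ℝ} (hr : 0 < r) {ω : S1}
    (h : w = r * ω) : (phase hw : ℂ) = ω := by
  rw [coe_phase, h, norm_mul, norm_real, ω.2, mul_one, Real.norm_of_nonneg hr.le,
    mul_div_cancel_left₀ _ (ofReal_ne_zero.mpr hr.ne')]

namespace HopfCompl

lemma fst_ne_zero (z : HopfCompl) : z.1.1 ≠ 0 := left_ne_zero_of_mul z.2.2

lemma snd_ne_zero (z : HopfCompl) : z.1.2 ≠ 0 := right_ne_zero_of_mul z.2.2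

lemma norm_fst_sq_mem_Ioo (z : HopfCompl) : ‖z.1.1‖ ^ 2 ∈ Set.Ioo (0 : ℝ) 1 := by
  have hsum : ‖z.1.1‖ ^ 2 + ‖z.1.2‖ ^ 2 = 1 := z.2.1
  have h1 := norm_pos_iff.mpr (fst_ne_zero z)
  have h2 := norm_pos_iff.mpr (snd_ne_zero z)
  constructor <;> nlinarith

noncomputable def piPlus (z : HopfCompl) : S1 := phase z.2.2

noncomputable def toProd (z : HopfCompl) : S1 × S1 × Set.Ioo (0 : ℝ) 1 :=
  (piPlus z, phase (fst_ne_zero z), ⟨_, norm_fst_sq_mem_Ioo z⟩)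

lemma continuous_toProd : Continuous toProd := by
  have h1 : Continuous fun z : HopfCompl => z.1.1 := continuous_subtype_val.fst
  have h2 : Continuous fun z : HopfCompl => z.1.2 := continuous_subtype_val.snd
  exact (continuous_phase (h1.mul h2) _).prodMk
    ((continuous_phase h1 _).prodMk ((h1.norm.pow 2).subtype_mk _))

section ofProd

variable (ω u : S1) (t : Set.Ioo (0 : ℝ) 1)

lemma norm_sqrt_mul (r : ℝ) : ‖(√r : ℂ) * u‖ = √r := by
  rw [norm_mul, norm_real, u.2, mul_one, Real.norm_of_nonneg (Real.sqrt_nonneg r)]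

lemma norm_sqrt_mul_mul_conj (r : ℝ) : ‖(√r : ℂ) * ω * conj (u : ℂ)‖ = √r := by
  rw [norm_mul, norm_sqrt_mul, Complex.norm_conj, u.2, mul_one]

lemma ofProd_mem :
    ((√t : ℂ) * u, (√(1 - t) : ℂ) * ω * conj (u : ℂ)) ∈ Sphere3 ∧
      (√t : ℂ) * u * ((√(1 - t) : ℂ) * ω * conj (u : ℂ)) ≠ 0 := by
  obtain ⟨t, ht0, ht1⟩ := t
  refine ⟨?_, ?_⟩
  · show ‖_‖ ^ 2 + ‖_‖ ^ 2 = 1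
    rw [norm_sqrt_mul, norm_sqrt_mul_mul_conj, Real.sq_sqrt ht0.le, Real.sq_sqrt (by linarith)]
    ring
  · rw [← norm_ne_zero_iff, norm_mul, norm_sqrt_mul, norm_sqrt_mul_mul_conj]
    have := Real.sqrt_pos.mpr ht0
    have := Real.sqrt_pos.mpr (sub_pos.mpr ht1)
    positivity

lemma ofProd_fst_mul_snd :
    (√t : ℂ) * u * ((√(1 - t) : ℂ) * ω * conj (u : ℂ)) = ((√t * √(1 - t) : ℝ) : ℂ) * ω := by
  calc _ = (√t : ℂ) * √(1 - t) * ω * ((u : ℂ) * conj (u : ℂ)) := by ring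
    _ = _ := by rw [coe_mul_conj, mul_one, ofReal_mul]

end ofProd

noncomputable def ofProd (p : S1 × S1 × Set.Ioo (0 : ℝ) 1) : HopfCompl :=
  ⟨_, ofProd_mem p.1 p.2.1 p.2.2⟩

lemma continuous_ofProd : Continuous ofProd := by
  have hω : Continuous fun p : S1 × S1 × Set.Ioo (0 : ℝ) 1 => (p.1 : ℂ) :=
    continuous_subtype_val.comp continuous_fst
  have hu : Continuous fun p : S1 × S1 × Set.Ioo (0 : ℝ) 1 => (p.2.1 : ℂ) :=
    continuous_subtype_val.comp continuous_snd.fst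
  have ht : Continuous fun p : S1 × S1 × Set.Ioo (0 : ℝ) 1 => (p.2.2 : ℝ) :=
    continuous_subtype_val.comp continuous_snd.snd
  exact ((continuous_ofReal.comp ht.sqrt).mul hu).prodMk
    (((continuous_ofReal.comp (continuous_const.sub ht).sqrt).mul hω).mul
      (continuous_conj.comp hu)) |>.subtype_mk _

lemma toProd_ofProd (p : S1 × S1 × Set.Ioo (0 : ℝ) 1) : toProd (ofProd p) = p := by
  obtain ⟨ω, u, t, ht0, ht1⟩ := p
  have hst := Real.sqrt_pos.mpr ht0
  refine Prod.ext (Subtype.ext ?_) (Prod.ext (Subtype.ext ?_) (Subtype.ext ?_))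
  · exact coe_phase_eq_of_eq_ofReal_mul (ofProd _).2.2
      (mul_pos hst (Real.sqrt_pos.mpr (sub_pos.mpr ht1))) (ofProd_fst_mul_snd ω u ⟨t, ht0, ht1⟩)
  · exact coe_phase_eq_of_eq_ofReal_mul (fst_ne_zero _) hst rfl
  · show ‖(√t : ℂ) * u‖ ^ 2 = t
    rw [norm_sqrt_mul, Real.sq_sqrt ht0.le]

lemma ofProd_toProd (z : HopfCompl) : ofProd (toProd z) = z := by
  obtain ⟨⟨a, b⟩, hab, h0⟩ := z
  have ha : (‖a‖ : ℂ) ≠ 0 := ofReal_ne_zero.mpr (norm_ne_zero_iff.mpr (left_ne_zero_of_mul h0))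
  have hb : (‖b‖ : ℂ) ≠ 0 := ofReal_ne_zero.mpr (norm_ne_zero_iff.mpr (right_ne_zero_of_mul h0))
  have hsqrt : √(1 - ‖a‖ ^ 2) = ‖b‖ := by
    rw [show 1 - ‖a‖ ^ 2 = ‖b‖ ^ 2 by linarith [hab.out], Real.sqrt_sq (norm_nonneg b)]
  refine Subtype.ext (Prod.ext ?_ ?_)
  · show (√(‖a‖ ^ 2) : ℂ) * (a / ‖a‖) = a
    rw [Real.sqrt_sq (norm_nonneg a), mul_div_cancel₀ _ ha]
  · show (√(1 - ‖a‖ ^ 2) : ℂ) * (a * b / ‖a * b‖) * conj (a / ‖a‖) = b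
    rw [hsqrt, map_div₀, conj_ofReal, norm_mul, ofReal_mul]
    field_simp
    rw [mul_right_comm, mul_conj']
    ring

noncomputable def homeomorphProd : HopfCompl ≃ₜ S1 × S1 × Set.Ioo (0 : ℝ) 1 where
  toFun := toProd
  invFun := ofProd
  left_inv := ofProd_toProd
  right_inv := toProd_ofProd
  continuous_toFun := continuous_toProd
  continuous_invFun := continuous_ofProd

end HopfCompl

/-- `π⁺ : S³ ∖ H⁺ → S¹`, `(z₁,z₂) ↦ z₁z₂/|z₁z₂|`, is a locally trivial fiber bundle
(in particular a continuous surjection), and each fiber is homeomorphic to the open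
annulus `S¹ × (0,1)`. -/
theorem piPlus_fiber_bundle :
    ∃ π : HopfCompl → S1,
      (∀ z : HopfCompl, (π z : ℂ) = (z.1.1 * z.1.2) / (‖z.1.1 * z.1.2‖ : ℂ)) ∧
      Continuous π ∧ Function.Surjective π ∧
      (∀ ω : S1, ∃ U : Set S1, IsOpen U ∧ ω ∈ U ∧
        ∃ e : {z : HopfCompl // π z ∈ U} ≃ₜ U × (S1 × Set.Ioo (0 : ℝ) 1),
          ∀ z : {z : HopfCompl // π z ∈ U}, ((e z).1 : S1) = π z.1) ∧
      (∀ ω : S1, Nonempty ({z : HopfCompl // π z = ω} ≃ₜ S1 × Set.Ioo (0 : ℝ) 1)) := by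
  let e := HopfCompl.homeomorphProd
  have : Nonempty (S1 × Set.Ioo (0 : ℝ) 1) := ⟨(⟨1, norm_one⟩, ⟨1 / 2, by norm_num⟩)⟩
  exact ⟨fun z => (e z).1, fun _ => rfl, continuous_fst.comp e.continuous,
    Prod.fst_surjective.comp e.surjective,
    fun ω => ⟨Set.univ, isOpen_univ, Set.mem_univ ω, e.restrictPreimageFst Set.univ, fun _ => rfl⟩,
    fun ω => ⟨e.fiberFst ω⟩⟩
end

section
/- The map i₊ : [0,1] × S¹ → S³ defined in polar coordinates by i₊(t,θ) = (√(1−t²), ω−θ, t, θ) (i.e. (z₁,z₂) = (√(1−t²) e^{i(ω−θ)}, t e^{iθ})) for a fixed ω ∈ ℝ is a topological embedding of the closed annulus into S³, whose image intersected with S³ ∖ H⁺ equals the fiber (π⁺)⁻¹(e^{iω}). -/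
open Complex

/-- The parametrization `i₊(t,θ) = (√(1−t²) e^{i(ω−θ)}, t e^{iθ})` of the closed
annulus `[0,1] × S¹` into `S³`, written with `s = e^{iθ}` (so `e^{i(ω−θ)} = e^{iω} s̄`). -/
noncomputable def iPlus (ω : ℝ) (x : Set.Icc (0 : ℝ) 1 × S1) : ℂ × ℂ :=
  ((Real.sqrt (1 - (x.1 : ℝ) ^ 2) : ℂ) * (Complex.exp (ω * Complex.I) * (starRingEnd ℂ) (x.2 : ℂ)),
   ((x.1 : ℝ) : ℂ) * (x.2 : ℂ))

/-!
Since `z₁ z₂ = √(1 - t²) t e^{iω}` on the image of `i₊`, the phase of `z₁ z₂` is `e^{iω}` wherever it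
is defined. Conversely, a point of that fiber is `i₊(|z₂|, z₂ / |z₂|)`. The map is injective
because `t = |z₂|`, and `s` is recovered from `z₂` when `t ≠ 0` and from `z₁` when `t = 0`;
as the annulus is compact and `ℂ²` is Hausdorff, the continuous injection `i₊` is an embedding.
-/

instance : CompactSpace S1 := by
  have : {w : ℂ | ‖w‖ = 1} = Metric.sphere 0 1 := by ext; simp
  exact (isCompact_iff_compactSpace (s := {w : ℂ | ‖w‖ = 1})).mp (this ▸ isCompact_sphere 0 1)

theorem Complex.ofReal_mul_div_norm {r : ℝ} (hr : 0 < r) {u : ℂ} (hu : ‖u‖ = 1) :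
    r * u / (‖(r : ℂ) * u‖ : ℂ) = u := by
  rw [norm_mul, norm_real, Real.norm_of_nonneg hr.le, hu, mul_one]
  exact mul_div_cancel_left₀ u (ofReal_ne_zero.2 hr.ne')

namespace iPlus

variable (ω : ℝ) (x : Set.Icc (0 : ℝ) 1 × S1)

theorem continuous : Continuous (iPlus ω) := by
  unfold iPlus; fun_prop

theorem norm_fst : ‖(iPlus ω x).1‖ = √(1 - (x.1 : ℝ) ^ 2) := by
  simp [iPlus, x.2.2]

theorem norm_snd : ‖(iPlus ω x).2‖ = x.1 := by
  simp [iPlus, x.2.2, abs_of_nonneg x.1.2.1]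

theorem mem_sphere3 : iPlus ω x ∈ Sphere3 := by
  have : (x.1 : ℝ) ^ 2 ≤ 1 := pow_le_one₀ x.1.2.1 x.1.2.2
  change ‖_‖ ^ 2 + ‖_‖ ^ 2 = 1
  rw [norm_fst, norm_snd, Real.sq_sqrt (sub_nonneg.2 this)]
  ring

theorem fst_mul_snd :
    (iPlus ω x).1 * (iPlus ω x).2 = ((√(1 - (x.1 : ℝ) ^ 2) * x.1 : ℝ) : ℂ) * exp (ω * I) := by
  have hs : starRingEnd ℂ x.2 * x.2 = 1 := by
    rw [mul_comm, mul_conj', x.2.2]; norm_num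
  simp only [iPlus]
  push_cast
  linear_combination ((√(1 - (x.1 : ℝ) ^ 2) : ℂ) * x.1 * exp (ω * I)) * hs

theorem injective : Function.Injective (iPlus ω) := by
  rintro ⟨t, s⟩ ⟨t', s'⟩ h
  have ht : t = t' := Subtype.ext <| by
    simpa only [norm_snd] using congrArg (‖·.2‖) h
  subst ht
  suffices (s : ℂ) = s' by rw [Subtype.ext this]
  by_cases ht0 : (t : ℝ) = 0
  · have h1 := congrArg Prod.fst h
    simp only [iPlus, ht0] at h1
    simpa [exp_ne_zero] using congrArg (starRingEnd ℂ) h1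
  · exact mul_left_cancel₀ (ofReal_ne_zero.2 ht0) (congrArg Prod.snd h)

theorem fst_mul_snd_div_norm (h : (iPlus ω x).1 * (iPlus ω x).2 ≠ 0) :
    (iPlus ω x).1 * (iPlus ω x).2 / (‖(iPlus ω x).1 * (iPlus ω x).2‖ : ℂ) = exp (ω * I) := by
  rw [fst_mul_snd] at h ⊢
  have hr : 0 ≤ √(1 - (x.1 : ℝ) ^ 2) * x.1 := mul_nonneg (Real.sqrt_nonneg _) x.1.2.1
  have hr0 : √(1 - (x.1 : ℝ) ^ 2) * x.1 ≠ 0 := by rintro h0; simp [h0] at h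
  exact ofReal_mul_div_norm (hr.lt_of_ne' hr0) (norm_exp_ofReal_mul_I ω)

theorem mem_range_of_fst_mul_snd_div_norm {z : ℂ × ℂ} (hz : z ∈ Sphere3) (h : z.1 * z.2 ≠ 0)
    (hω : z.1 * z.2 / (‖z.1 * z.2‖ : ℂ) = exp (ω * I)) : z ∈ Set.range (iPlus ω) := by
  obtain ⟨h1, h2⟩ := mul_ne_zero_iff.1 h
  have hn1 : (‖z.1‖ : ℂ) ≠ 0 := ofReal_ne_zero.2 (norm_ne_zero_iff.2 h1)
  have hn2 : (‖z.2‖ : ℂ) ≠ 0 := ofReal_ne_zero.2 (norm_ne_zero_iff.2 h2)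
  have hsqrt : √(1 - ‖z.2‖ ^ 2) = ‖z.1‖ := by
    rw [← hz, add_sub_cancel_right, Real.sqrt_sq (norm_nonneg _)]
  have ht1 : ‖z.2‖ ≤ 1 := by
    rw [← sq_le_one_iff₀ (norm_nonneg _), ← hz]
    exact le_add_of_nonneg_left (sq_nonneg _)
  have hs : ‖z.2 / (‖z.2‖ : ℂ)‖ = 1 := by
    rw [norm_div, norm_real, norm_norm, div_self (norm_ne_zero_iff.2 h2)]
  refine ⟨(⟨‖z.2‖, norm_nonneg _, ht1⟩, ⟨z.2 / ‖z.2‖, hs⟩), Prod.ext ?_ ?_⟩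
  · simp only [iPlus, hsqrt, ← hω, map_div₀, conj_ofReal, norm_mul, ofReal_mul]
    field_simp
    exact mul_conj' z.2
  · exact mul_div_cancel₀ z.2 hn2

end iPlus

/-- `i₊` is a topological embedding of the closed annulus `[0,1] × S¹` into `S³`,
and its image intersected with `S³ ∖ H⁺` is exactly the fiber `(π⁺)⁻¹(e^{iω})`. -/
theorem iPlus_embedding (ω : ℝ) :
    Topology.IsEmbedding (iPlus ω) ∧
    (∀ x, iPlus ω x ∈ Sphere3) ∧
    Set.range (iPlus ω) ∩ {z | z ∈ Sphere3 ∧ z.1 * z.2 ≠ 0} =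
      {z : ℂ × ℂ | (z ∈ Sphere3 ∧ z.1 * z.2 ≠ 0) ∧
        (z.1 * z.2) / (‖z.1 * z.2‖ : ℂ) = Complex.exp (ω * Complex.I)} := by
  refine ⟨((iPlus.continuous ω).isClosedEmbedding (iPlus.injective ω)).isEmbedding,
    iPlus.mem_sphere3 ω, Set.ext fun z => ⟨?_, ?_⟩⟩
  · rintro ⟨⟨x, rfl⟩, hz⟩
    exact ⟨hz, iPlus.fst_mul_snd_div_norm ω x hz.2⟩
  · rintro ⟨hz, hω⟩
    exact ⟨iPlus.mem_range_of_fst_mul_snd_div_norm ω hz.1 hz.2 hω, hz⟩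
end

section
/- The map π_U : S³ ∖ U → S¹ defined by (z₁,z₂) ↦ z₁/|z₁|, where U = {(z₁,z₂) ∈ S³ : z₁ = 0}, is a locally trivial fiber bundle whose fibers are homeomorphic to the open disk; moreover S³ ∖ U is homeomorphic to S¹ × int(D²). -/
open Complex

/-- The complement `S³ ∖ U` of the unknot `U = {z₁ = 0}`, as a topological space. -/
abbrev UnknotCompl : Type := {z : ℂ × ℂ // z ∈ Sphere3 ∧ z.1 ≠ 0}

/-- The open unit disk `int(D²) ⊂ ℝ²`. -/
abbrev OpenDisk : Type := ↥(Metric.ball (0 : ℝ × ℝ) 1)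

/-!
The map `(z₁, z₂) ↦ (z₁/|z₁|, z₂)` is a homeomorphism `S³ ∖ U ≃ S¹ × int(D²)`, with inverse
`(ω, w) ↦ (√(1 - |w|²) ω, w)`, and its first component is `π_U`. So `π_U` is a globally
trivial bundle, and local triviality and the fibers come from this single trivialization.
-/

section

open Set Metric

def Homeomorph.toTrivialization {Z B F : Type*} [TopologicalSpace Z] [TopologicalSpace B]
    [TopologicalSpace F] (e : Z ≃ₜ B × F) {p : Z → B} (he : ∀ z, (e z).1 = p z) :
    Bundle.Trivialization F p where
  toOpenPartialHomeomorph := e.toOpenPartialHomeomorph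
  baseSet := univ
  open_baseSet := isOpen_univ
  source_eq := preimage_univ.symm
  target_eq := univ_prod_univ.symm
  proj_toFun z _ := he z

noncomputable def Homeomorph.unitBallCongr {E F : Type*} [NormedAddCommGroup E]
    [NormedSpace ℝ E] [NormedAddCommGroup F] [NormedSpace ℝ F] (e : E ≃L[ℝ] F) :
    ball (0 : E) 1 ≃ₜ ball (0 : F) 1 :=
  Homeomorph.unitBall.symm.trans (e.toHomeomorph.trans Homeomorph.unitBall)

lemma one_sub_norm_sq_pos {E : Type*} [SeminormedAddCommGroup E] {w : E} (hw : ‖w‖ < 1) :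
    0 < 1 - ‖w‖ ^ 2 := by
  nlinarith [norm_nonneg w]

namespace UnknotCompl

lemma norm_sq_add_norm_sq (z : UnknotCompl) : ‖z.1.1‖ ^ 2 + ‖z.1.2‖ ^ 2 = 1 := z.2.1

lemma norm_snd_lt_one (z : UnknotCompl) : ‖z.1.2‖ < 1 := by
  nlinarith [norm_sq_add_norm_sq z, norm_pos_iff.mpr z.2.2, norm_nonneg z.1.2]

noncomputable def proj (z : UnknotCompl) : S1 :=
  ⟨z.1.1 / ‖z.1.1‖, by simp [z.2.2]⟩

noncomputable def ofCircleProdDisk (q : S1 × ball (0 : ℂ) 1) : UnknotCompl :=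
  ⟨((q.1 : ℂ) * (√(1 - ‖(q.2 : ℂ)‖ ^ 2) : ℂ), q.2), by
    have hw := one_sub_norm_sq_pos (mem_ball_zero_iff.mp q.2.2)
    refine ⟨?_, mul_ne_zero (norm_ne_zero_iff.mp (by simp [q.1.2]))
      (Complex.ofReal_ne_zero.mpr (Real.sqrt_pos.mpr hw).ne')⟩
    show ‖_‖ ^ 2 + _ = 1
    rw [norm_mul, q.1.2, Complex.norm_real, Real.norm_of_nonneg (Real.sqrt_nonneg _), one_mul,
      Real.sq_sqrt hw.le]
    ring⟩

noncomputable def homeomorphCircleProdDisk : UnknotCompl ≃ₜ S1 × ball (0 : ℂ) 1 where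
  toFun z := (proj z, ⟨z.1.2, mem_ball_zero_iff.mpr (norm_snd_lt_one z)⟩)
  invFun := ofCircleProdDisk
  left_inv z := by
    have hsq : 1 - ‖z.1.2‖ ^ 2 = ‖z.1.1‖ ^ 2 := by linarith [norm_sq_add_norm_sq z]
    refine Subtype.ext (Prod.ext ?_ rfl)
    show z.1.1 / ‖z.1.1‖ * (√(1 - ‖z.1.2‖ ^ 2) : ℂ) = z.1.1
    rw [hsq, Real.sqrt_sq (norm_nonneg _), div_mul_cancel₀ _ (by simpa using z.2.2)]
  right_inv q := by
    have hr := Real.sqrt_pos.mpr (one_sub_norm_sq_pos (mem_ball_zero_iff.mp q.2.2))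
    refine Prod.ext (Subtype.ext ?_) rfl
    show (q.1 : ℂ) * (√(1 - ‖(q.2 : ℂ)‖ ^ 2) : ℂ) /
      ‖(q.1 : ℂ) * (√(1 - ‖(q.2 : ℂ)‖ ^ 2) : ℂ)‖ = q.1
    rw [norm_mul, q.1.2, Complex.norm_real, Real.norm_of_nonneg hr.le, one_mul,
      mul_div_cancel_right₀ _ (Complex.ofReal_ne_zero.mpr hr.ne')]
  continuous_toFun := by
    unfold proj
    fun_prop (disch := exact fun z => by simpa using z.2.2)
  continuous_invFun := by
    unfold ofCircleProdDisk
    fun_prop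

noncomputable def homeomorphCircleProdOpenDisk : UnknotCompl ≃ₜ S1 × OpenDisk :=
  homeomorphCircleProdDisk.trans
    ((Homeomorph.refl S1).prodCongr (Homeomorph.unitBallCongr Complex.equivRealProdCLM))

end UnknotCompl

end

/-- `π_U : S³ ∖ U → S¹`, `(z₁,z₂) ↦ z₁/|z₁|`, is a locally trivial fiber bundle whose
fibers are homeomorphic to the open disk; moreover `S³ ∖ U ≅ S¹ × int(D²)`. -/
theorem piU_fiber_bundle :
    ∃ π : UnknotCompl → S1,
      (∀ z : UnknotCompl, (π z : ℂ) = z.1.1 / (‖z.1.1‖ : ℂ)) ∧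
      Continuous π ∧ Function.Surjective π ∧
      (∀ ω : S1, ∃ U : Set S1, IsOpen U ∧ ω ∈ U ∧
        ∃ e : {z : UnknotCompl // π z ∈ U} ≃ₜ U × OpenDisk,
          ∀ z : {z : UnknotCompl // π z ∈ U}, ((e z).1 : S1) = π z.1) ∧
      (∀ ω : S1, Nonempty ({z : UnknotCompl // π z = ω} ≃ₜ OpenDisk)) ∧
      Nonempty (UnknotCompl ≃ₜ S1 × OpenDisk) := by
  let e := UnknotCompl.homeomorphCircleProdOpenDisk
  have he : ∀ z, (e z).1 = UnknotCompl.proj z := fun _ => rfl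
  let t := e.toTrivialization he
  have : Nonempty OpenDisk := ⟨⟨0, Metric.mem_ball_self one_pos⟩⟩
  refine ⟨UnknotCompl.proj, fun _ => rfl, (continuous_fst.comp e.continuous).congr he,
    Set.surjOn_univ.mp t.proj_surjOn_baseSet, fun _ => ?_,
    fun _ => ⟨t.preimageSingletonHomeomorph trivial⟩, ⟨e⟩⟩
  exact ⟨Set.univ, isOpen_univ, trivial, t.preimageHomeomorph (Set.subset_univ Set.univ),
    fun _ => rfl⟩
end
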